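/- arXiv:1903.11497 — 2 statements merged into one kernel-verified Lean document; each statement's English description precedes it below -/
import Mathlib

section
/- Let F ⊆ E ⊆ L and F ⊆ K ⊆ L be finite fields with |F| = q, [E : F] = n, [K : F] = m, and [L : F] = lcm(n, m). Let η : Eˣ → ℂˣ be an F-regular multiplicative character. Then for every integer i ≥ 0, the character ξ : Lˣ → ℂˣ defined by ξ(a) = η(N_{L/E}(a)^{q^i}) is K-regular; that is, the characters a ↦ ξ(a^{q^{mj}}) for 0 ≤ j ≤ n/gcd(n,m) − 1 are pairwise distinct (note [L : K] = n/gcd(n,m)). -/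
/-!
Since `N_{L/E}` is surjective on units, the hypothesis on `a ↦ η (N (a ^ q ^ (m j)) ^ q ^ i)`
is one on `x ↦ η (x ^ q ^ (m j + i))` for all `x : Eˣ`, and `x ^ q ^ k` only depends on
`k mod n` because `|E| = q ^ n`. The `F`-regularity of `η` thus gives
`m j + i ≡ m j' + i [MOD n]`, and cancelling `m` leaves `j ≡ j' [MOD n / gcd n m]`.
-/

theorem FiniteField.pow_pow_eq_pow_pow_mod {E : Type*} [Field E] [Finite E] {q n : ℕ}
    (hE : Nat.card E = q ^ n) (k : ℕ) (a : E) : a ^ q ^ k = a ^ q ^ (k % n) := by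
  have := Fintype.ofFinite E
  rw [Nat.card_eq_fintype_card] at hE
  conv_lhs => rw [← Nat.mod_add_div k n, pow_add, pow_mul, pow_mul, ← hE,
    FiniteField.pow_card_pow]

theorem FiniteField.units_pow_pow_eq_pow_pow_mod {E : Type*} [Field E] [Finite E] {q n : ℕ}
    (hE : Nat.card E = q ^ n) (k : ℕ) (x : Eˣ) : x ^ q ^ k = x ^ q ^ (k % n) :=
  Units.ext <| by simpa only [Units.val_pow_eq_pow_val] using
    FiniteField.pow_pow_eq_pow_pow_mod hE k (x : E)

theorem FiniteField.unitsMap_norm_pow_pow {E L : Type*} [Field E] [Finite E] [Field L]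
    [Algebra E L] {q n : ℕ} (hE : Nat.card E = q ^ n) (a : Lˣ) (k i : ℕ) :
    Units.map (Algebra.norm E) (a ^ q ^ k) ^ q ^ i =
      Units.map (Algebra.norm E) a ^ q ^ ((k + i) % n) := by
  rw [map_pow, ← pow_mul, ← pow_add, units_pow_pow_eq_pow_pow_mod hE]

theorem Nat.eq_of_mul_add_modEq_of_lt_div_gcd {n m i j j' : ℕ} (hn : 0 < n)
    (hj : j < n / n.gcd m) (hj' : j' < n / n.gcd m) (h : m * j + i ≡ m * j' + i [MOD n]) :
    j = j' := by
  have hmod : j ≡ j' [MOD n / n.gcd m] := (Nat.ModEq.add_right_cancel' i h).cancel_left_div_gcd hn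
  rwa [Nat.ModEq, Nat.mod_eq_of_lt hj, Nat.mod_eq_of_lt hj'] at hmod

namespace Stmt4

theorem norm_inflation_regular_general
    (F : Type*) [Field F] [Fintype F]
    (L : Type*) [Field L] [Fintype L] [Algebra F L]
    (q n m : ℕ) (hq : Fintype.card F = q)
    (E : IntermediateField F L)
    (hE : Module.finrank F ↥E = n)
    (η : (↥E)ˣ →* ℂˣ)
    (hreg : ∀ i < n, ∀ j < n, (∀ x : (↥E)ˣ, η (x ^ q ^ i) = η (x ^ q ^ j)) → i = j) :
    ∀ i : ℕ, ∀ j < n / Nat.gcd n m, ∀ j' < n / Nat.gcd n m,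
      (∀ a : Lˣ,
          η ((Units.map (Algebra.norm ↥E) (a ^ q ^ (m * j))) ^ q ^ i) =
            η ((Units.map (Algebra.norm ↥E) (a ^ q ^ (m * j'))) ^ q ^ i)) →
      j = j' := by
  intro i j hj j' hj' H
  have hcard : Nat.card E = q ^ n := by
    rw [Module.natCard_eq_pow_finrank (K := F), hE, Nat.card_eq_fintype_card, hq]
  have hn : 0 < n := hE ▸ Module.finrank_pos
  refine Nat.eq_of_mul_add_modEq_of_lt_div_gcd (i := i) hn hj hj' <|
    hreg _ (Nat.mod_lt _ hn) _ (Nat.mod_lt _ hn) fun x => ?_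
  obtain ⟨a, rfl⟩ := FiniteField.unitsMap_norm_surjective E L x
  simpa only [FiniteField.unitsMap_norm_pow_pow hcard] using H a

theorem norm_inflation_regular
    (F : Type*) [Field F] [Fintype F]
    (L : Type*) [Field L] [Fintype L] [Algebra F L]
    (q n m : ℕ) (hq : Fintype.card F = q)
    (E K : IntermediateField F L)
    (hE : Module.finrank F ↥E = n) (hK : Module.finrank F ↥K = m)
    (hL : Module.finrank F L = Nat.lcm n m)
    (η : (↥E)ˣ →* ℂˣ)
    (hreg : ∀ i < n, ∀ j < n, (∀ x : (↥E)ˣ, η (x ^ q ^ i) = η (x ^ q ^ j)) → i = j) :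
    ∀ i : ℕ, ∀ j < n / Nat.gcd n m, ∀ j' < n / Nat.gcd n m,
      (∀ a : Lˣ,
          η ((Units.map (Algebra.norm ↥E) (a ^ q ^ (m * j))) ^ q ^ i) =
            η ((Units.map (Algebra.norm ↥E) (a ^ q ^ (m * j'))) ^ q ^ i)) →
      j = j' :=
  norm_inflation_regular_general F L q n m hq E hE η hreg

end Stmt4
end

section
/- Let k be a field, G a group, H and K subgroups of G, and (σ, W) a k-linear representation of H. For g ∈ G let ᵍH = gHg⁻¹ and let ᵍσ be the representation of ᵍH on W defined by ᵍσ(ghg⁻¹) = σ(h). Let R ⊆ G be a set of representatives of the double cosets K\G/H. Then there is an isomorphism of k-linear representations of K: Res^G_K Ind_H^G σ ≅ ⊕_{g ∈ R} Ind_{K ∩ ᵍH}^{K} (Res^{ᵍH}_{K ∩ ᵍH} ᵍσ), where Ind_H^G σ denotes the induced representation k[G] ⊗_{k[H]} W with G acting by left multiplication on k[G], and Res denotes restriction of a representation to a subgroup. -/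
/-!
Statement 5: Mackey's restriction formula
`Res^G_K Ind_H^G σ ≅ ⊕_{g ∈ K\G/H} Ind_{K ∩ ᵍH}^K (Res ᵍσ)`,
where `Ind_H^G σ` is realized as `k[G] ⊗_{k[H]} W`, i.e. as the quotient of `k[G] ⊗_k W`
by the relations `(a·h) ⊗ w = a ⊗ σ(h)w` (`h ∈ H`), with `G` acting by left multiplication
on the `k[G]` factor.
-/

open TensorProduct BigOperators DirectSum

namespace Stmt5

variable {k : Type*} [Field k] {G : Type*} [Group G]

section Ind

variable (H : Subgroup G) {W : Type*} [AddCommGroup W] [Module k W]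
  (σ : Representation k H W)

/-- The submodule of `k[G] ⊗_k W` spanned by the relations `(a * h) ⊗ w - a ⊗ σ(h)w`,
`h ∈ H`.  Quotienting by it realizes `k[G] ⊗_{k[H]} W`. -/
noncomputable def indRel : Submodule k (MonoidAlgebra k G ⊗[k] W) :=
  Submodule.span k {z | ∃ (a : MonoidAlgebra k G) (h : H) (w : W),
    z = (a * MonoidAlgebra.single (h : G) 1) ⊗ₜ[k] w - a ⊗ₜ[k] (σ h w)}

/-- The underlying space of the induced representation `Ind_H^G σ = k[G] ⊗_{k[H]} W`. -/
noncomputable abbrev IndV := (MonoidAlgebra k G ⊗[k] W) ⧸ indRel H σ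

/-- Left multiplication by `g` on the `k[G]` factor of `k[G] ⊗_k W`. -/
noncomputable def indAux (g : G) :
    (MonoidAlgebra k G ⊗[k] W) →ₗ[k] (MonoidAlgebra k G ⊗[k] W) :=
  LinearMap.rTensor W (LinearMap.mulLeft k (MonoidAlgebra.single g 1))

lemma indRel_le (g : G) :
    indRel H σ ≤ (indRel H σ).comap (indAux (k := k) (G := G) g (W := W)) := by
  rw [indRel, Submodule.span_le]
  rintro z ⟨a, h, w, rfl⟩
  refine Submodule.mem_comap.2 ?_
  have hcalc : indAux (k := k) (G := G) g (W := W)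
      ((a * MonoidAlgebra.single (h : G) 1) ⊗ₜ[k] w - a ⊗ₜ[k] (σ h w))
      = ((MonoidAlgebra.single g 1 * a) * MonoidAlgebra.single (h : G) 1) ⊗ₜ[k] w
        - (MonoidAlgebra.single g 1 * a) ⊗ₜ[k] (σ h w) := by
    simp [indAux, mul_assoc]
  rw [hcalc]
  exact Submodule.subset_span ⟨MonoidAlgebra.single g 1 * a, h, w, rfl⟩

/-- The induced representation `Ind_H^G σ` on `k[G] ⊗_{k[H]} W`:
`g` acts by left multiplication on the `k[G]` factor. -/
noncomputable def indRep : Representation k G (IndV H σ) where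
  toFun g := Submodule.mapQ (indRel H σ) (indRel H σ) (indAux g) (indRel_le H σ g)
  map_one' := by
    apply Submodule.linearMap_qext
    refine LinearMap.ext fun z => ?_
    have hAux : indAux (k := k) (G := G) (1 : G) (W := W) = LinearMap.id := by
      unfold indAux
      rw [show MonoidAlgebra.single (1 : G) (1 : k) = 1 from
          (MonoidAlgebra.one_def).symm,
        LinearMap.mulLeft_one, LinearMap.rTensor_id]
    simp [Submodule.mapQ_apply, hAux]
  map_mul' g₁ g₂ := by
    apply Submodule.linearMap_qext
    refine LinearMap.ext fun z => ?_
    have hAux : indAux (k := k) (G := G) (g₁ * g₂) (W := W)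
        = (indAux (k := k) (G := G) g₁ (W := W)).comp
            (indAux (k := k) (G := G) g₂ (W := W)) := by
      unfold indAux
      rw [show MonoidAlgebra.single (g₁ * g₂) (1 : k)
            = MonoidAlgebra.single g₁ 1 * MonoidAlgebra.single g₂ 1 by
          rw [MonoidAlgebra.single_mul_single, one_mul],
        LinearMap.mulLeft_mul, LinearMap.rTensor_comp]
    simp [Submodule.mapQ_apply, hAux, Module.End.mul_apply]

end Ind

/-- The conjugate subgroup `ᵍH = g H g⁻¹`. -/
def conjSubgroup (g : G) (H : Subgroup G) : Subgroup G where
  carrier := {x | g⁻¹ * x * g ∈ H}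
  one_mem' := by simpa using H.one_mem
  mul_mem' := fun {a b} ha hb => by simpa [mul_assoc] using H.mul_mem ha hb
  inv_mem' := fun {a} ha => by simpa [mul_assoc] using H.inv_mem ha

/-- The isomorphism `ᵍH ≅ H`, `x ↦ g⁻¹ x g`. -/
def conjHom (g : G) (H : Subgroup G) : ↥(conjSubgroup g H) →* ↥H :=
  MonoidHom.mk' (fun x => ⟨g⁻¹ * (x : G) * g, x.2⟩)
    (fun a b => by
      ext
      simp [mul_assoc])

/-- The conjugate representation `ᵍσ` of `ᵍH` on `W`, `ᵍσ(g h g⁻¹) = σ(h)`,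
i.e. `ᵍσ(x) = σ(g⁻¹ x g)`. -/
noncomputable def conjRep (H : Subgroup G) {W : Type*} [AddCommGroup W] [Module k W]
    (σ : Representation k H W) (g : G) : Representation k (conjSubgroup g H) W :=
  MonoidHom.comp σ (conjHom g H)

/-- The inclusion `S ∩ K = S.subgroupOf K → S`. -/
def subgroupOfHom (S K : Subgroup G) : ↥(S.subgroupOf K) →* ↥S :=
  MonoidHom.mk' (fun x => ⟨((x : K) : G), x.2⟩) (fun a b => rfl)

/-- The representation `Res^{ᵍH}_{K ∩ ᵍH} ᵍσ` of the subgroup `K ∩ ᵍH` of `K`. -/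
noncomputable def mackeySummandRep (H K : Subgroup G) {W : Type*} [AddCommGroup W]
    [Module k W] (σ : Representation k H W) (g : G) :
    Representation k ((conjSubgroup g H).subgroupOf K) W :=
  MonoidHom.comp (conjRep H σ g) (subgroupOfHom (conjSubgroup g H) K)

/-!
Since `G` is the disjoint union of the double cosets `K r H`, `r ∈ R`, every `g ∈ G` is `c r h`
with `r ∈ R` unique, and `g ⊗ w ↦ c ⊗ σ(h) w` in the `r`-th summand is well defined: two such
decompositions of `g` differ by an element `y = c⁻¹ c'` of `K ∩ ʳH`, which acts on the summand
through `ʳσ(y) = σ(r⁻¹ y r)`, and the relations `g h ⊗ w = g ⊗ σ(h) w` are respected. The inverse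
sends `c ⊗ w` in the `r`-th summand to `c r ⊗ w`. Both maps commute with left multiplication by `K`.
-/

lemma constr_basis_single {M : Type*} [AddCommMonoid M] [Module k M] (f : G → M) (g : G)
    (s : k) :
    (MonoidAlgebra.basis G k).constr k f (MonoidAlgebra.single g s) = s • f g := by
  have : MonoidAlgebra.single g s = s • MonoidAlgebra.basis G k g := by simp
  rw [this, map_smul, Module.Basis.constr_basis]

namespace IndV

variable {H : Subgroup G} {W : Type*} [AddCommGroup W] [Module k W]
  (σ : Representation k H W) {V : Type*} [AddCommMonoid V] [Module k V]

noncomputable def of (g : G) : W →ₗ[k] IndV H σ :=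
  (indRel H σ).mkQ ∘ₗ TensorProduct.mk k (MonoidAlgebra k G) W (MonoidAlgebra.single g 1)

lemma of_mul (g : G) (h : H) (w : W) : of σ (g * h) w = of σ g (σ h w) := by
  simp only [of, LinearMap.comp_apply, TensorProduct.mk_apply, Submodule.mkQ_apply,
    Submodule.Quotient.eq]
  refine Submodule.subset_span ⟨MonoidAlgebra.single g 1, h, w, ?_⟩
  simp [MonoidAlgebra.single_mul_single]

variable {σ} in
lemma hom_ext {φ ψ : IndV H σ →ₗ[k] V} (h : ∀ g, φ ∘ₗ of σ g = ψ ∘ₗ of σ g) : φ = ψ :=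
  have hq : φ ∘ₗ (indRel H σ).mkQ = ψ ∘ₗ (indRel H σ).mkQ :=
    TensorProduct.ext <| (MonoidAlgebra.basis G k).ext fun g => h g
  LinearMap.ext fun x => by
    obtain ⟨z, rfl⟩ := (indRel H σ).mkQ_surjective x
    exact LinearMap.congr_fun hq z

noncomputable def lift (f : G → W →ₗ[k] V) (hf : ∀ g (h : H) w, f (g * h) w = f g (σ h w)) :
    IndV H σ →ₗ[k] V :=
  -- `liftQ` needs an additive group as target; every module over a ring is one.
  letI := Module.addCommMonoidToAddCommGroup k (M := V)
  (indRel H σ).liftQ (TensorProduct.lift ((MonoidAlgebra.basis G k).constr k f)) <| by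
    rw [indRel, Submodule.span_le]
    rintro _ ⟨a, h, w, rfl⟩
    rw [SetLike.mem_coe, LinearMap.mem_ker, map_sub, sub_eq_zero]
    induction a using MonoidAlgebra.induction_linear with
    | zero => simp
    | add a b ha hb => simp only [add_mul, TensorProduct.add_tmul, map_add, ha, hb]
    | single g s =>
      simp [MonoidAlgebra.single_mul_single, constr_basis_single, hf]

@[simp]
lemma lift_of (f : G → W →ₗ[k] V) (hf : ∀ g (h : H) w, f (g * h) w = f g (σ h w))
    (g : G) (w : W) : lift σ f hf (of σ g w) = f g w := by
  simp [lift, of, constr_basis_single]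

@[simp]
lemma indRep_of (x g : G) (w : W) : indRep H σ x (of σ g w) = of σ (x * g) w := by
  simp [of, indRep, indAux, MonoidAlgebra.single_mul_single]

end IndV

section Mackey

variable (H K : Subgroup G) {W : Type*} [AddCommGroup W] [Module k W]
  (σ : Representation k H W)

def IsDoubleCosetTransversal (R : Set G) : Prop :=
  ∀ x : G, ∃! r, r ∈ R ∧ ∃ c ∈ K, ∃ h ∈ H, x = c * r * h

abbrev MackeySummand (r : G) : Type _ :=
  IndV ((conjSubgroup r H).subgroupOf K) (mackeySummandRep H K σ r)

variable {H K σ} in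
lemma MackeySummand.of_eq_of_mul_mul_eq {r : G} {c c' : K} {h h' : H}
    (hcc : (c : G) * r * h = c' * r * h') (w : W) :
    IndV.of (mackeySummandRep H K σ r) c (σ h w)
      = IndV.of (mackeySummandRep H K σ r) c' (σ h' w) := by
  have hc' : (c' : G) = c * r * h * (h' : G)⁻¹ * r⁻¹ := by
    rw [hcc]; group
  have hy : r⁻¹ * ((c⁻¹ * c' : K) : G) * r = h * (h' : G)⁻¹ := by
    push_cast
    rw [hc']; group
  have hmem : c⁻¹ * c' ∈ (conjSubgroup r H).subgroupOf K := by
    rw [Subgroup.mem_subgroupOf]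
    show r⁻¹ * _ * r ∈ H
    rw [hy]
    exact H.mul_mem h.2 (H.inv_mem h'.2)
  have hact : mackeySummandRep H K σ r ⟨c⁻¹ * c', hmem⟩ (σ h' w) = σ h w := by
    change σ ⟨r⁻¹ * ((c⁻¹ * c' : K) : G) * r, _⟩ (σ h' w) = σ h w
    rw [← Module.End.mul_apply, ← map_mul]
    congr
    ext
    change r⁻¹ * ((c⁻¹ * c' : K) : G) * r * h' = h
    rw [hy, inv_mul_cancel_right]
  rw [show c' = c * (⟨c⁻¹ * c', hmem⟩ : (conjSubgroup r H).subgroupOf K) by simp,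
    IndV.of_mul, hact]

noncomputable def mackeySummandToInd (r : G) : MackeySummand H K σ r →ₗ[k] IndV H σ :=
  IndV.lift _ (fun c => IndV.of σ (c * r)) fun c y w => by
    have : ((c * y : K) : G) * r = c * r * ((⟨r⁻¹ * y * r, y.2⟩ : H) : G) := by
      push_cast; group
    rw [this, IndV.of_mul]
    rfl

@[simp]
lemma mackeySummandToInd_of (r : G) (c : K) (w : W) :
    mackeySummandToInd H K σ r (IndV.of _ c w) = IndV.of σ (c * r) w :=
  IndV.lift_of ..

section DoubleCosets

variable {H K} {R : Set G}

lemma IsDoubleCosetTransversal.exists_eq_mul_mul (hR : IsDoubleCosetTransversal H K R)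
    (g : G) :
    ∃ p : R × K × H, g = p.2.1 * p.1 * p.2.2 := by
  obtain ⟨r, ⟨hr, c, hc, h, hh, hg⟩, -⟩ := hR g
  exact ⟨(⟨r, hr⟩, ⟨c, hc⟩, ⟨h, hh⟩), hg⟩

lemma IsDoubleCosetTransversal.lof_of_eq_of_mul_mul_eq [DecidableEq R]
    (hR : IsDoubleCosetTransversal H K R)
    {r r' : R} {c c' : K} {h h' : H} (hcc : (c : G) * r * h = c' * r' * h') (w : W) :
    DirectSum.lof k R (fun r : R => MackeySummand H K σ r) r (IndV.of _ c (σ h w))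
      = DirectSum.lof k R (fun r : R => MackeySummand H K σ r) r' (IndV.of _ c' (σ h' w)) := by
  obtain rfl : r = r' := Subtype.ext <|
    (hR _).unique ⟨r.2, c, c.2, h, h.2, rfl⟩ ⟨r'.2, c', c'.2, h', h'.2, hcc⟩
  rw [MackeySummand.of_eq_of_mul_mul_eq hcc]

variable (hR : IsDoubleCosetTransversal H K R) [DecidableEq R]

noncomputable def indToMackeyFamily (g : G) : W →ₗ[k] ⨁ r : R, MackeySummand H K σ r :=
  let p := (hR.exists_eq_mul_mul g).choose
  DirectSum.lof k R (fun r : R => MackeySummand H K σ r) p.1 ∘ₗ IndV.of _ p.2.1 ∘ₗ σ p.2.2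

lemma indToMackeyFamily_mul_mul (r : R) (c : K) (h : H) (w : W) :
    indToMackeyFamily σ hR (c * r * h) w = DirectSum.lof k R (fun r : R => MackeySummand H K σ r) r (IndV.of _ c (σ h w)) := by
  have hg := (hR.exists_eq_mul_mul (c * r * h)).choose_spec
  exact hR.lof_of_eq_of_mul_mul_eq σ hg.symm w

noncomputable def indToMackey : IndV H σ →ₗ[k] ⨁ r : R, MackeySummand H K σ r :=
  IndV.lift σ (indToMackeyFamily σ hR) fun g h w => by
    obtain ⟨⟨r, c, h₀⟩, hg⟩ := hR.exists_eq_mul_mul g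
    rw [hg, indToMackeyFamily_mul_mul, mul_assoc _ (h₀ : G), ← Subgroup.coe_mul,
      indToMackeyFamily_mul_mul, map_mul, Module.End.mul_apply]

lemma indToMackey_of (r : R) (c : K) (h : H) (w : W) :
    indToMackey σ hR (IndV.of σ (c * r * h) w)
      = DirectSum.lof k R (fun r : R => MackeySummand H K σ r) r (IndV.of _ c (σ h w)) := by
  rw [indToMackey, IndV.lift_of, indToMackeyFamily_mul_mul]

variable (R) in
noncomputable def mackeyToInd : (⨁ r : R, MackeySummand H K σ r) →ₗ[k] IndV H σ :=
  DirectSum.toModule k R _ fun r => mackeySummandToInd H K σ r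

lemma mackeyToInd_lof (r : R) (c : K) (w : W) :
    mackeyToInd σ R (DirectSum.lof k R (fun r : R => MackeySummand H K σ r) r (IndV.of _ c w))
      = IndV.of σ (c * r) w := by
  rw [mackeyToInd, DirectSum.toModule_lof, mackeySummandToInd_of]

lemma mackeyToInd_comp_indToMackey : mackeyToInd σ R ∘ₗ indToMackey σ hR = LinearMap.id := by
  refine IndV.hom_ext fun g => LinearMap.ext fun w => ?_
  obtain ⟨⟨r, c, h⟩, rfl⟩ := hR.exists_eq_mul_mul g
  dsimp only
  rw [LinearMap.id_comp, LinearMap.comp_apply, LinearMap.comp_apply, indToMackey_of,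
    mackeyToInd_lof, IndV.of_mul]

lemma indToMackey_comp_mackeyToInd : indToMackey σ hR ∘ₗ mackeyToInd σ R = LinearMap.id := by
  refine DirectSum.linearMap_ext _ fun r => IndV.hom_ext fun c => LinearMap.ext fun w => ?_
  have h₁ := indToMackey_of σ hR r c 1 w
  rw [OneMemClass.coe_one, mul_one, map_one, Module.End.one_apply] at h₁
  simp only [LinearMap.comp_apply, mackeyToInd_lof, h₁, LinearMap.id_apply]

lemma indToMackey_comp_indRep (x : K) :
    indToMackey σ hR ∘ₗ indRep H σ x
      = DirectSum.lmap (fun r : R => indRep _ (mackeySummandRep H K σ r) x)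
          ∘ₗ indToMackey σ hR := by
  refine IndV.hom_ext fun g => LinearMap.ext fun w => ?_
  obtain ⟨⟨r, c, h⟩, rfl⟩ := hR.exists_eq_mul_mul g
  dsimp only
  have hx : (x : G) * (c * r * h) = (x * c : K) * r * h := by
    simp only [Subgroup.coe_mul, mul_assoc]
  simp only [LinearMap.comp_apply, IndV.indRep_of, hx, indToMackey_of, DirectSum.lmap_lof]

end DoubleCosets

end Mackey

/-- Mackey's restriction formula.  If `R` is a set of representatives of
the double cosets `K\G/H`, then there is a `k`-linear isomorphism
`Res^G_K Ind_H^G σ ≅ ⊕_{r ∈ R} Ind_{K ∩ ʳH}^K (Res ʳσ)` which is `K`-equivariant. -/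
theorem mackey_restriction
    (H K : Subgroup G) {W : Type*} [AddCommGroup W] [Module k W]
    (σ : Representation k H W)
    (R : Set G)
    (hR : ∀ x : G, ∃! r, r ∈ R ∧ ∃ c ∈ K, ∃ h ∈ H, x = c * r * h) :
    ∃ e : IndV H σ ≃ₗ[k]
        ⨁ r : R, IndV ((conjSubgroup (r : G) H).subgroupOf K)
          (mackeySummandRep H K σ (r : G)),
      ∀ (x : K) (v : IndV H σ) (r : R),
        e (indRep H σ (x : G) v) r
          = indRep ((conjSubgroup (r : G) H).subgroupOf K)
              (mackeySummandRep H K σ (r : G)) x (e v r) := by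
  classical
  refine ⟨LinearEquiv.ofLinearMap (indToMackey σ hR) (mackeyToInd σ R)
    (indToMackey_comp_mackeyToInd σ hR) (mackeyToInd_comp_indToMackey σ hR), fun x v r => ?_⟩
  exact DFunLike.congr_fun (LinearMap.congr_fun (indToMackey_comp_indRep σ hR x) v) r

end Stmt5
end
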